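/- arXiv:math/0301191 — 3 statements merged into one kernel-verified Lean document; each statement's English description precedes it below -/
import Mathlib

section
/- Let V be a finite-dimensional complex inner product space, σ : V → V a conjugate-linear involution with ⟪σ v, σ w⟫ = conj ⟪v, w⟫, and (e₁, …, e_N) an ℝ-basis of Fix(σ) orthonormal with respect to the restricted inner product. Then for every v ∈ V with ‖v‖ = 1, one has ‖∑ i, ⟪e_i, v⟫^2‖ ≤ 1, and equality holds if and only if there exists a real number θ such that Complex.exp(θ * Complex.I) • v ∈ Fix(σ). -/
open scoped InnerProductSpace

/-- For a unit vector `v`, the Fubini–Study norm `‖∑ᵢ ⟪eᵢ, v⟫²‖` of the section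
`∑ κᵢ^{⊗2}` is at most `1`, with equality iff a unit complex multiple of `v` lies in
the real form `Fix(σ)`. -/
theorem norm_sum_inner_sq_le_one {V : Type*} [NormedAddCommGroup V]
    [InnerProductSpace ℂ V] [FiniteDimensional ℂ V]
    (σ : V → V)
    (hadd : ∀ v w : V, σ (v + w) = σ v + σ w)
    (hsmul : ∀ (c : ℂ) (v : V), σ (c • v) = (starRingEnd ℂ c) • σ v)
    (hinv : σ ∘ σ = id)
    (hinner : ∀ v w : V, ⟪σ v, σ w⟫_ℂ = (starRingEnd ℂ) ⟪v, w⟫_ℂ)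
    (N : ℕ) (e : Fin N → V)
    (hfix : ∀ i, σ (e i) = e i)
    (hindep : LinearIndependent ℝ e)
    (hspan : ∀ v : V, σ v = v → ∃ c : Fin N → ℝ, v = ∑ i, c i • e i)
    (hortho : ∀ i j, (⟪e i, e j⟫_ℂ).re = if i = j then 1 else 0)
    (v : V) (hv : ‖v‖ = 1) :
    ‖∑ i, ⟪e i, v⟫_ℂ ^ 2‖ ≤ 1 ∧
    (‖∑ i, ⟪e i, v⟫_ℂ ^ 2‖ = 1 ↔
      ∃ θ : ℝ, σ (Complex.exp (θ * Complex.I) • v) = Complex.exp (θ * Complex.I) • v) := by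
  classical
  have hσσ : ∀ w, σ (σ w) = w := fun w => congrFun hinv w
  -- the inner products of the `e i` are real, so `e` is a complex orthonormal family
  have hreal : ∀ i j, ⟪e i, e j⟫_ℂ = if i = j then 1 else 0 := by
    intro i j
    have h1 : ⟪e i, e j⟫_ℂ = (starRingEnd ℂ) ⟪e i, e j⟫_ℂ := by
      conv_lhs => rw [← hfix i, ← hfix j, hinner]
    have him : (⟪e i, e j⟫_ℂ).im = 0 := by
      have := congrArg Complex.im h1
      simp only [Complex.conj_im] at this
      linarith
    apply Complex.ext
    · have := hortho i j
      split <;> simp_all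
    · split <;> simp [him]
  have hon : Orthonormal ℂ e := orthonormal_iff_ite.mpr hreal
  -- `e` spans `V` over `ℂ`
  have hsp : ⊤ ≤ Submodule.span ℂ (Set.range e) := by
    intro w _
    have hmem : ∀ u : V, σ u = u → u ∈ Submodule.span ℂ (Set.range e) := by
      intro u hu
      obtain ⟨c, hc⟩ := hspan u hu
      rw [hc]
      exact Submodule.sum_mem _ fun i _ =>
        Submodule.smul_of_tower_mem _ _ (Submodule.subset_span ⟨i, rfl⟩)
    have ha : σ (w + σ w) = w + σ w := by rw [hadd, hσσ, add_comm]
    have hb : σ ((-Complex.I) • (w - σ w)) = (-Complex.I) • (w - σ w) := by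
      have hsub : σ (w - σ w) = σ w - w := by
        have h := hadd (w - σ w) (σ w)
        rw [hσσ] at h
        rw [show w - σ w + σ w = w by abel] at h
        rw [eq_sub_iff_add_eq]
        exact h.symm
      rw [hsmul, hsub]
      simp only [map_neg, Complex.conj_I, neg_neg]
      module
    have key : w = (2 : ℂ)⁻¹ • (w + σ w) +
        ((2 : ℂ)⁻¹ * Complex.I) • ((-Complex.I) • (w - σ w)) := by
      rw [smul_smul]
      have : (2 : ℂ)⁻¹ * Complex.I * -Complex.I = (2 : ℂ)⁻¹ := by
        have := Complex.I_mul_I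
        ring_nf
        rw [Complex.I_sq]
        ring
      rw [this]
      module
    rw [key]
    exact Submodule.add_mem _ (Submodule.smul_mem _ _ (hmem _ ha))
      (Submodule.smul_mem _ _ (hmem _ hb))
  let B : OrthonormalBasis (Fin N) ℂ V := OrthonormalBasis.mk hon hsp
  have hB : ∀ i, B i = e i := fun i => by
    simp [B, OrthonormalBasis.coe_mk]
  -- Parseval
  have hpar : ∀ w : V, ∑ i, ‖⟪e i, w⟫_ℂ‖ ^ 2 = ‖w‖ ^ 2 := by
    intro w
    have h := B.sum_inner_mul_inner w w
    simp only [hB] at h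
    have h2 : ∀ i, ⟪w, e i⟫_ℂ * ⟪e i, w⟫_ℂ = (‖⟪e i, w⟫_ℂ‖ ^ 2 : ℝ) := by
      intro i
      rw [← inner_conj_symm w (e i), RCLike.conj_mul]
      norm_num
    rw [Finset.sum_congr rfl (fun i _ => h2 i)] at h
    have h3 := congrArg Complex.re h
    rw [Complex.re_sum] at h3
    simp only [Complex.ofReal_re] at h3
    rwa [show Complex.re ⟪w, w⟫_ℂ = ‖w‖ ^ 2 from @inner_self_eq_norm_sq ℂ V _ _ _ w] at h3
  -- reconstruction
  have hrepr : ∀ w : V, ∑ i, ⟪e i, w⟫_ℂ • e i = w := by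
    intro w
    have := B.sum_repr' w
    simpa only [hB] using this
  -- additivity of σ packaged
  let σh : V →+ V := AddMonoidHom.mk' σ hadd
  -- main inequality
  have hineq : ‖∑ i, ⟪e i, v⟫_ℂ ^ 2‖ ≤ 1 := by
    calc ‖∑ i, ⟪e i, v⟫_ℂ ^ 2‖ ≤ ∑ i, ‖⟪e i, v⟫_ℂ ^ 2‖ := norm_sum_le _ _
    _ = ∑ i, ‖⟪e i, v⟫_ℂ‖ ^ 2 := by simp [norm_pow]
    _ = 1 := by rw [hpar v, hv, one_pow]
  refine ⟨hineq, ?_, ?_⟩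
  · -- equality → fixed by σ after rotation
    intro heq
    set S : ℂ := ∑ i, ⟪e i, v⟫_ℂ ^ 2 with hS
    refine ⟨-(S.arg) / 2, ?_⟩
    set u : ℂ := Complex.exp ((-(S.arg) / 2 : ℝ) * Complex.I) with hu
    have hunorm : ‖u‖ = 1 := by
      rw [hu]
      exact Complex.norm_exp_ofReal_mul_I _
    have hu2 : u ^ 2 = Complex.exp ((-(S.arg) : ℝ) * Complex.I) := by
      rw [hu, ← Complex.exp_nat_mul]
      congr 1
      push_cast
      ring
    have hu2S : u ^ 2 * S = 1 := by
      have habs : ‖S‖ = 1 := by exact heq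
      set a := S.arg with ha
      have hSexp : Complex.exp ((a : ℂ) * Complex.I) = S := by
        have h0 := Complex.norm_mul_exp_arg_mul_I S
        rwa [habs, ← ha, Complex.ofReal_one, one_mul] at h0
      rw [hu2, ← hSexp, ← Complex.exp_add]
      rw [show ((-a : ℝ) : ℂ) * Complex.I + (a : ℂ) * Complex.I = 0 by push_cast; ring,
        Complex.exp_zero]
    set w : V := u • v with hw
    have hwnorm : ‖w‖ = 1 := by rw [hw, norm_smul, hunorm, hv, one_mul]
    have hcw : ∀ i, ⟪e i, w⟫_ℂ = u * ⟪e i, v⟫_ℂ := fun i => by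
      rw [hw, inner_smul_right]
    have hsum2 : ∑ i, ⟪e i, w⟫_ℂ ^ 2 = 1 := by
      calc ∑ i, ⟪e i, w⟫_ℂ ^ 2 = ∑ i, u ^ 2 * ⟪e i, v⟫_ℂ ^ 2 := by
            refine Finset.sum_congr rfl fun i _ => ?_
            rw [hcw i]; ring
        _ = u ^ 2 * S := by rw [← Finset.mul_sum]
        _ = 1 := hu2S
    -- all coordinates of w are real
    have hzero : ∑ i, (2 * (⟪e i, w⟫_ℂ).im ^ 2) = 0 := by
      have h1 : ∑ i, ‖⟪e i, w⟫_ℂ‖ ^ 2 = 1 := by rw [hpar w, hwnorm, one_pow]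
      have h2 : ∑ i, (⟪e i, w⟫_ℂ ^ 2).re = 1 := by
        have := congrArg Complex.re hsum2
        simpa [Complex.re_sum] using this
      have h3 : ∀ i, 2 * (⟪e i, w⟫_ℂ).im ^ 2
          = ‖⟪e i, w⟫_ℂ‖ ^ 2 - (⟪e i, w⟫_ℂ ^ 2).re := by
        intro i
        have ha : (⟪e i, w⟫_ℂ ^ 2).re
            = (⟪e i, w⟫_ℂ).re * (⟪e i, w⟫_ℂ).re - (⟪e i, w⟫_ℂ).im * (⟪e i, w⟫_ℂ).im := by
          rw [pow_two, Complex.mul_re]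
        have hb : ‖⟪e i, w⟫_ℂ‖ ^ 2
            = (⟪e i, w⟫_ℂ).re * (⟪e i, w⟫_ℂ).re + (⟪e i, w⟫_ℂ).im * (⟪e i, w⟫_ℂ).im := by
          rw [Complex.sq_norm, Complex.normSq_apply]
        rw [ha, hb]
        ring
      rw [Finset.sum_congr rfl fun i _ => h3 i, Finset.sum_sub_distrib, h1, h2, sub_self]
    have him : ∀ i, (⟪e i, w⟫_ℂ).im = 0 := by
      intro i
      have := (Finset.sum_eq_zero_iff_of_nonneg (fun i _ => by positivity)).mp hzero i
        (Finset.mem_univ i)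
      nlinarith [this]
    -- hence σ w = w
    have : σ w = w := by
      conv_lhs => rw [← hrepr w]
      have : σ (∑ i, ⟪e i, w⟫_ℂ • e i) = ∑ i, σ (⟪e i, w⟫_ℂ • e i) :=
        map_sum σh _ _
      rw [this]
      conv_rhs => rw [← hrepr w]
      refine Finset.sum_congr rfl fun i _ => ?_
      rw [hsmul, hfix]
      congr 1
      exact Complex.ext (Complex.conj_re _) (by rw [Complex.conj_im, him i, neg_zero])
    simpa [hw, hu] using this
  · -- fixed by σ after rotation → equality
    rintro ⟨θ, hθ⟩
    set u : ℂ := Complex.exp ((θ : ℝ) * Complex.I) with hu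
    have hunorm : ‖u‖ = 1 := by
      rw [hu]
      exact Complex.norm_exp_ofReal_mul_I _
    set w : V := u • v with hw
    have hwnorm : ‖w‖ = 1 := by rw [hw, norm_smul, hunorm, hv, one_mul]
    -- coordinates of w are real
    have him : ∀ i, (⟪e i, w⟫_ℂ).im = 0 := by
      intro i
      have h1 : ⟪e i, w⟫_ℂ = (starRingEnd ℂ) ⟪e i, w⟫_ℂ := by
        conv_lhs => rw [← hfix i, ← hθ]
        rw [hinner]
      have := congrArg Complex.im h1
      simp only [Complex.conj_im] at this
      linarith
    have hreal2 : ∀ i, ⟪e i, w⟫_ℂ ^ 2 = (‖⟪e i, w⟫_ℂ‖ ^ 2 : ℝ) := by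
      intro i
      have hc : (starRingEnd ℂ) ⟪e i, w⟫_ℂ = ⟪e i, w⟫_ℂ :=
        Complex.ext (Complex.conj_re _) (by rw [Complex.conj_im, him i, neg_zero])
      rw [Complex.sq_norm, ← Complex.mul_conj, hc, pow_two]
    have hsum2 : ∑ i, ⟪e i, w⟫_ℂ ^ 2 = 1 := by
      rw [Finset.sum_congr rfl fun i _ => hreal2 i]
      rw [← Complex.ofReal_sum, hpar w, hwnorm]
      norm_num
    have hcw : ∀ i, ⟪e i, w⟫_ℂ = u * ⟪e i, v⟫_ℂ := fun i => by
      rw [hw, inner_smul_right]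
    have : u ^ 2 * ∑ i, ⟪e i, v⟫_ℂ ^ 2 = 1 := by
      rw [Finset.mul_sum]
      rw [← hsum2]
      refine Finset.sum_congr rfl fun i _ => ?_
      rw [hcw i]; ring
    have hn := congrArg norm this
    rw [norm_mul, norm_pow, hunorm, one_pow, one_mul, norm_one] at hn
    exact hn
end

section
/- Let H be an n × n complex matrix that is Hermitian and positive semidefinite. Then det H is a nonnegative real number and det H ≤ det (Re H), where Re H denotes the real matrix whose (j,k) entry is the real part of H j k. -/
open scoped ComplexOrder
open Matrix

private lemma det_conj_unitary {n : ℕ} (U : Matrix (Fin n) (Fin n) ℂ)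
    (hU : U ∈ Matrix.unitaryGroup (Fin n) ℂ) (Y : Matrix (Fin n) (Fin n) ℂ) :
    (U * Y * star U).det = Y.det := by
  have h1 : U * star U = 1 := Matrix.mem_unitaryGroup_iff.mp hU
  have h2 : (U * star U).det = U.det * (star U).det := det_mul _ _
  rw [h1, det_one] at h2
  rw [det_mul, det_mul]
  calc U.det * Y.det * (star U).det = (U.det * (star U).det) * Y.det := by ring
    _ = Y.det := by rw [← h2]; ring

/-- For a Hermitian positive semidefinite complex matrix `H`, the determinant is a
nonnegative real number and is at most the determinant of the entrywise real part of `H`. -/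
theorem det_le_det_re_of_posSemidef {n : ℕ} (H : Matrix (Fin n) (Fin n) ℂ)
    (hHerm : H.IsHermitian) (hPSD : H.PosSemidef) :
    (H.det).im = 0 ∧ 0 ≤ (H.det).re ∧ (H.det).re ≤ (H.map Complex.re).det := by
  classical
  set Ac : Matrix (Fin n) (Fin n) ℂ := H.map (fun z => ((z.re : ℝ) : ℂ)) with hAcdef
  -- determinant of positive semidefinite matrices over ℂ is nonneg real
  have detPSD : ∀ (K : Matrix (Fin n) (Fin n) ℂ), K.PosSemidef → 0 ≤ K.det := by
    intro K hK
    rw [hK.1.det_eq_prod_eigenvalues]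
    refine Finset.prod_nonneg fun i _ => ?_
    rw [Complex.le_def]
    simpa using hK.eigenvalues_nonneg i
  have hdetH : 0 ≤ H.det := detPSD H hPSD
  have hsum : H + Hᵀ = (2:ℂ) • Ac := by
    ext i j
    have h := hHerm.apply i j  -- star (H j i) = H i j
    simp only [Matrix.add_apply, transpose_apply, hAcdef, Matrix.smul_apply, map_apply, smul_eq_mul]
    rw [← h, Complex.star_def, add_comm, Complex.add_conj]
    push_cast
    simp [Complex.conj_re]
  have hAcHerm : Ac.IsHermitian := by
    ext i j
    have h := hHerm.apply i j
    simp only [conjTranspose_apply, hAcdef, map_apply, Complex.star_def, Complex.conj_ofReal]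
    rw [← h]
    simp [Complex.star_def]
  have half_nonneg : (0:ℂ) ≤ (2:ℂ)⁻¹ := by
    rw [Complex.le_def]; norm_num
  have hAcPSD : Ac.PosSemidef := by
    refine .of_dotProduct_mulVec_nonneg hAcHerm fun x => ?_
    have hS : ((2:ℂ) • Ac).PosSemidef := hsum ▸ hPSD.add hPSD.transpose
    have h2 := hS.dotProduct_mulVec_nonneg x
    rw [smul_mulVec, dotProduct_smul, smul_eq_mul] at h2
    have := mul_nonneg half_nonneg h2
    rwa [← mul_assoc, inv_mul_cancel₀ (two_ne_zero), one_mul] at this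
  have hAcdet : Ac.det = ((H.map Complex.re).det : ℂ) := by
    have hmap : Ac = (Complex.ofRealHom : ℝ →+* ℂ).mapMatrix (H.map Complex.re) := by
      ext i j; simp [hAcdef]
    rw [hmap, ← RingHom.map_det]
    rfl
  have hAcdetnn : 0 ≤ (H.map Complex.re).det := by
    have := detPSD Ac hAcPSD
    rw [hAcdet, Complex.le_def] at this
    simpa using this.1
  by_cases ha : (H.map Complex.re).det = 0
  · -- degenerate case: det H = 0
    have hAc0 : Ac.det = 0 := by rw [hAcdet, ha, Complex.ofReal_zero]
    obtain ⟨x, hx0, hx⟩ := (Matrix.exists_mulVec_eq_zero_iff.mpr hAc0)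
    have hq : star x ⬝ᵥ H *ᵥ x + star x ⬝ᵥ Hᵀ *ᵥ x = 0 := by
      have : star x ⬝ᵥ (H + Hᵀ) *ᵥ x = 0 := by
        rw [hsum, smul_mulVec, hx, smul_zero, dotProduct_zero]
      rwa [add_mulVec, dotProduct_add] at this
    have h1 := hPSD.dotProduct_mulVec_nonneg x
    have h2 := hPSD.transpose.dotProduct_mulVec_nonneg x
    have hq1 : star x ⬝ᵥ H *ᵥ x = 0 := by
      have hle : star x ⬝ᵥ H *ᵥ x ≤ 0 := by
        have : star x ⬝ᵥ H *ᵥ x = -(star x ⬝ᵥ Hᵀ *ᵥ x) := by linear_combination hq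
        rw [this]
        exact neg_nonpos_of_nonneg h2
      exact le_antisymm hle h1
    have hHx : H *ᵥ x = 0 := (hPSD.dotProduct_mulVec_zero_iff x).mp hq1
    have hdet0 : H.det = 0 := Matrix.exists_mulVec_eq_zero_iff.mp ⟨x, hx0, hHx⟩
    refine ⟨by simp [hdet0], by simp [hdet0], by simp [hdet0, ha]⟩
  · -- main case
    set a : ℝ := (H.map Complex.re).det with hadef
    have hapos : 0 < a := lt_of_le_of_ne hAcdetnn (Ne.symm ha)
    open scoped MatrixOrder in
    set L := CFC.sqrt Ac with hLdef
    open scoped MatrixOrder in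
    have hLH : L.IsHermitian := (CFC.sqrt_nonneg Ac).posSemidef.1
    open scoped MatrixOrder in
    have hLL : L * L = Ac := CFC.sqrt_mul_sqrt_self Ac hAcPSD.nonneg
    have hLdet : L.det * L.det = (a:ℂ) := by rw [← det_mul, hLL, hAcdet]
    have hLdet0 : L.det ≠ 0 := by
      intro h
      rw [h, mul_zero] at hLdet
      exact ha (by exact_mod_cast congrArg Complex.re hLdet.symm)
    have hLunit : IsUnit L.det := isUnit_iff_ne_zero.mpr hLdet0
    have hLinv : L⁻¹ * L = 1 := nonsing_inv_mul _ hLunit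
    have hLinv' : L * L⁻¹ = 1 := mul_nonsing_inv _ hLunit
    have hLinvH : (L⁻¹).conjTranspose = L⁻¹ := hLH.inv
    set M := L⁻¹ * H * L⁻¹ with hMdef
    set N := L⁻¹ * Hᵀ * L⁻¹ with hNdef
    have hMPSD : M.PosSemidef := by
      have := hPSD.conjTranspose_mul_mul_same L⁻¹
      rwa [hLinvH] at this
    have hNPSD : N.PosSemidef := by
      have := hPSD.transpose.conjTranspose_mul_mul_same L⁻¹
      rwa [hLinvH] at this
    have hMN : M + N = (2:ℂ) • 1 := by
      have : M + N = L⁻¹ * (H + Hᵀ) * L⁻¹ := by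
        rw [hMdef, hNdef, mul_add, add_mul]
      rw [this, hsum, ← hLL]
      rw [Matrix.mul_smul, Matrix.smul_mul]
      congr 1
      calc L⁻¹ * (L * L) * L⁻¹ = (L⁻¹ * L) * (L * L⁻¹) := by
            rw [← mul_assoc, ← mul_assoc]
        _ = 1 := by rw [hLinv, hLinv', one_mul]
    have hNM : N = (2:ℂ) • 1 - M := by rw [← hMN]; abel
    -- eigenvalues of M
    set μ := hMPSD.1.eigenvalues with hμdef
    have hμ0 : ∀ i, 0 ≤ μ i := hMPSD.eigenvalues_nonneg
    have hμ2 : ∀ i, μ i ≤ 2 := by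
      intro i
      set v : Fin n → ℂ := ⇑(hMPSD.1.eigenvectorBasis i) with hvdef
      have hv : M *ᵥ v = μ i • v := hMPSD.1.mulVec_eigenvectorBasis i
      have hvne : v ≠ 0 := by
        intro h
        have h0 : hMPSD.1.eigenvectorBasis i = 0 := (WithLp.ofLp_eq_zero (p := 2)).mp h
        have := hMPSD.1.eigenvectorBasis.orthonormal.1 i
        rw [h0, norm_zero] at this
        norm_num at this
      have hc : 0 < star v ⬝ᵥ v := Matrix.dotProduct_star_self_pos_iff.mpr hvne
      have hcre : 0 < (star v ⬝ᵥ v).re ∧ (star v ⬝ᵥ v).im = 0 := by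
        rw [Complex.lt_def] at hc
        exact ⟨by simpa using hc.1, by simpa using hc.2.symm⟩
      have hq := hNPSD.dotProduct_mulVec_nonneg v
      have hNv : N *ᵥ v = (2:ℂ) • v - μ i • v := by
        rw [hNM, sub_mulVec, smul_mulVec, one_mulVec, hv]
      rw [hNv, dotProduct_sub, dotProduct_smul, dotProduct_smul] at hq
      have hqre := (Complex.le_def.mp hq).1
      simp only [smul_eq_mul, Complex.sub_re, Complex.zero_re] at hqre
      have h2re : ((2:ℂ) * (star v ⬝ᵥ v)).re = 2 * (star v ⬝ᵥ v).re := by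
        simp [Complex.mul_re]
      have hμre : ((μ i) • (star v ⬝ᵥ v)).re = μ i * (star v ⬝ᵥ v).re := by
        rw [Complex.real_smul, Complex.mul_re, Complex.ofReal_re, Complex.ofReal_im]
        rw [hcre.2]
        ring
      rw [h2re, hμre] at hqre
      nlinarith [hcre.1]
    -- determinant computations
    have hdetM : M.det = ∏ i, ((μ i : ℝ) : ℂ) := hMPSD.1.det_eq_prod_eigenvalues
    have hU2 := hMPSD.1.eigenvectorUnitary.2
    set U : Matrix (Fin n) (Fin n) ℂ := (hMPSD.1.eigenvectorUnitary : Matrix (Fin n) (Fin n) ℂ) with hUdef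
    have hU1 : U * star U = 1 := Matrix.mem_unitaryGroup_iff.mp hU2
    have hdetN : N.det = ∏ i, ((2 - μ i : ℝ) : ℂ) := by
      have hspec := hMPSD.1.spectral_theorem
      have h2I : U * ((2:ℂ) • 1) * star U = (2:ℂ) • (1 : Matrix (Fin n) (Fin n) ℂ) := by
        rw [mul_smul_comm, Matrix.smul_mul, mul_one, hU1]
      have hspec' : M = U * diagonal (Complex.ofReal ∘ μ) * star U := hspec
      have hNeq : N = U * ((2:ℂ) • 1 - diagonal (Complex.ofReal ∘ μ)) * star U := by
        rw [hNM, mul_sub, sub_mul, h2I, ← hspec']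
      rw [hNeq, det_conj_unitary U hU2]
      rw [smul_one_eq_diagonal, diagonal_sub, det_diagonal]
      push_cast
      rfl
    have hdetNM : N.det = M.det := by
      rw [hMdef, hNdef, det_mul, det_mul, det_mul, det_mul, det_transpose]
    -- p := ∏ μ i
    set p : ℝ := ∏ i, μ i with hpdef
    have hp0 : 0 ≤ p := Finset.prod_nonneg fun i _ => hμ0 i
    have hdetMp : M.det = (p:ℂ) := by rw [hdetM, hpdef]; push_cast; rfl
    have hpsq : p * p = ∏ i, (μ i * (2 - μ i)) := by
      have h1 : ((p:ℂ)) * ((p:ℂ)) = M.det * N.det := by rw [hdetNM, hdetMp]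
      rw [hdetM, hdetN, ← Finset.prod_mul_distrib] at h1
      have h2 : ((p * p : ℝ) : ℂ) = ((∏ i, (μ i * (2 - μ i)) : ℝ) : ℂ) := by
        push_cast
        convert h1 using 2 <;> push_cast <;> ring
      exact_mod_cast h2
    have hpsq1 : p * p ≤ 1 := by
      rw [hpsq]
      apply Finset.prod_le_one
      · intro i _
        have := hμ0 i; have := hμ2 i
        nlinarith [sq_nonneg (1 - μ i)]
      · intro i _
        have := hμ0 i; have := hμ2 i
        nlinarith [sq_nonneg (1 - μ i)]
    have hp1 : p ≤ 1 := by nlinarith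
    -- det H = a * p
    have hHLM : L * M * L = H := by
      rw [hMdef]
      calc L * (L⁻¹ * H * L⁻¹) * L = (L * L⁻¹) * H * (L⁻¹ * L) := by
            simp only [mul_assoc]
        _ = H := by rw [hLinv', hLinv, one_mul, mul_one]
    have hdetHap : H.det = ((a * p : ℝ) : ℂ) := by
      rw [← hHLM, det_mul, det_mul, hdetMp]
      push_cast
      calc L.det * (p:ℂ) * L.det = (L.det * L.det) * (p:ℂ) := by ring
        _ = (a:ℂ) * (p:ℂ) := by rw [hLdet]
    refine ⟨by rw [hdetHap]; simp, by rw [hdetHap]; simpa using mul_nonneg hapos.le hp0, ?_⟩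
    rw [hdetHap]
    simp only [Complex.ofReal_re]
    nlinarith
end

section
/- Let n be a natural number, V a finite-dimensional complex inner product space, σ : V → V a conjugate-linear involution with ⟪σ v, σ w⟫ = conj ⟪v, w⟫, and (e₁, …, e_N) an ℝ-basis of Fix(σ) orthonormal for the restricted inner product. Then for any v ∈ V, ‖∑ i, ⟪e_i, v⟫^2‖ ≤ ‖v‖², with equality if v ∈ Fix(σ); in particular the restriction of the complexified quadratic form v ↦ ∑ ⟪e_i, v⟫² to Fix(σ) equals the (real) squared norm: for v ∈ Fix(σ), ∑ i, ⟪e_i, v⟫^2 = (‖v‖² : ℂ). -/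
open scoped InnerProductSpace ComplexConjugate

/-! Since `σ` is conjugate-unitary and fixes every `eᵢ`, the Gram matrix `⟪eᵢ, eⱼ⟫` is real,
so `e` is a genuine orthonormal family of the complex space. The bound is then Bessel's
inequality after the triangle inequality, and for `v = ∑ cᵢ eᵢ` with real `cᵢ` both
`∑ ⟪eᵢ, v⟫²` and `‖v‖²` equal `∑ cᵢ²`. -/

section

variable {𝕜 E ι : Type*} [RCLike 𝕜] [SeminormedAddCommGroup E] [InnerProductSpace 𝕜 E]

theorem inner_conj_eq_of_fixed {σ : E → E}
    (hinner : ∀ v w : E, ⟪σ v, σ w⟫_𝕜 = conj ⟪v, w⟫_𝕜) {v w : E} (hv : σ v = v)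
    (hw : σ w = w) : conj ⟪v, w⟫_𝕜 = ⟪v, w⟫_𝕜 := by
  rw [← hinner, hv, hw]

theorem orthonormal_of_conj_inner_eq_of_re_inner_eq_ite [DecidableEq ι] {e : ι → E}
    (hconj : ∀ i j, conj ⟪e i, e j⟫_𝕜 = ⟪e i, e j⟫_𝕜)
    (hre : ∀ i j, RCLike.re ⟪e i, e j⟫_𝕜 = if i = j then 1 else 0) : Orthonormal 𝕜 e := by
  refine orthonormal_iff_ite.mpr fun i j => ?_
  rw [← RCLike.conj_eq_iff_re.mp (hconj i j), hre i j]
  split_ifs <;> simp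

variable [Fintype ι] {e : ι → E}

theorem Orthonormal.norm_sum_inner_sq_le (he : Orthonormal 𝕜 e) (v : E) :
    ‖∑ i, ⟪e i, v⟫_𝕜 ^ 2‖ ≤ ‖v‖ ^ 2 :=
  calc ‖∑ i, ⟪e i, v⟫_𝕜 ^ 2‖ ≤ ∑ i, ‖⟪e i, v⟫_𝕜 ^ 2‖ := norm_sum_le _ _
    _ = ∑ i, ‖⟪e i, v⟫_𝕜‖ ^ 2 := by simp only [norm_pow]
    _ ≤ ‖v‖ ^ 2 := Orthonormal.sum_inner_products_le v he

variable [Module ℝ E] [IsScalarTower ℝ 𝕜 E]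

theorem Orthonormal.inner_sum_real_smul (he : Orthonormal 𝕜 e) (c : ι → ℝ) (i : ι) :
    ⟪e i, ∑ j, c j • e j⟫_𝕜 = c i := by
  simp only [RCLike.real_smul_eq_coe_smul (K := 𝕜)]
  exact he.inner_right_fintype _ i

theorem Orthonormal.norm_sum_real_smul_sq (he : Orthonormal 𝕜 e) (c : ι → ℝ) :
    ‖∑ j, c j • e j‖ ^ 2 = ∑ j, c j ^ 2 := by
  rw [@norm_sq_eq_re_inner 𝕜]
  simp only [RCLike.real_smul_eq_coe_smul (K := 𝕜), he.inner_sum, RCLike.conj_ofReal,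
    map_sum, ← RCLike.ofReal_mul, RCLike.ofReal_re, sq]

theorem Orthonormal.sum_inner_sq_eq_norm_sq_of_real (he : Orthonormal 𝕜 e) (c : ι → ℝ) :
    ∑ i, ⟪e i, ∑ j, c j • e j⟫_𝕜 ^ 2 = ((‖∑ j, c j • e j‖ ^ 2 : ℝ) : 𝕜) := by
  simp only [he.inner_sum_real_smul, he.norm_sum_real_smul_sq]
  push_cast
  rfl

end

theorem sum_inner_sq_restricts_to_norm_sq_general {V : Type*} [NormedAddCommGroup V]
    [InnerProductSpace ℂ V]
    (σ : V → V)
    (hinner : ∀ v w : V, ⟪σ v, σ w⟫_ℂ = (starRingEnd ℂ) ⟪v, w⟫_ℂ)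
    (N : ℕ) (e : Fin N → V)
    (hfix : ∀ i, σ (e i) = e i)
    (hspan : ∀ v : V, σ v = v → ∃ c : Fin N → ℝ, v = ∑ i, c i • e i)
    (hortho : ∀ i j, (⟪e i, e j⟫_ℂ).re = if i = j then 1 else 0) :
    ∀ v : V, ‖∑ i, ⟪e i, v⟫_ℂ ^ 2‖ ≤ ‖v‖ ^ 2 ∧
      (σ v = v → ‖∑ i, ⟪e i, v⟫_ℂ ^ 2‖ = ‖v‖ ^ 2) ∧
      (σ v = v → ∑ i, ⟪e i, v⟫_ℂ ^ 2 = ((‖v‖ ^ 2 : ℝ) : ℂ)) := by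
  have he : Orthonormal ℂ e := orthonormal_of_conj_inner_eq_of_re_inner_eq_ite
    (fun i j => inner_conj_eq_of_fixed hinner (hfix i) (hfix j)) hortho
  have hfixed : ∀ v, σ v = v → ∑ i, ⟪e i, v⟫_ℂ ^ 2 = ((‖v‖ ^ 2 : ℝ) : ℂ) := fun v hv => by
    obtain ⟨c, rfl⟩ := hspan v hv
    exact he.sum_inner_sq_eq_norm_sq_of_real c
  intro v
  refine ⟨he.norm_sum_inner_sq_le v, fun hv => ?_, hfixed v⟩
  rw [hfixed v hv, Complex.norm_real, Real.norm_of_nonneg (by positivity)]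

/-- For any `v ∈ V`, `‖∑ᵢ ⟪eᵢ, v⟫²‖ ≤ ‖v‖²`, with equality if `v` lies in the real form
`Fix(σ)`; moreover on `Fix(σ)` the complexified quadratic form `∑ᵢ ⟪eᵢ, v⟫²` equals the
squared norm `‖v‖²`. -/
theorem sum_inner_sq_restricts_to_norm_sq {V : Type*} [NormedAddCommGroup V]
    [InnerProductSpace ℂ V] [FiniteDimensional ℂ V]
    (σ : V → V)
    (hadd : ∀ v w : V, σ (v + w) = σ v + σ w)
    (hsmul : ∀ (c : ℂ) (v : V), σ (c • v) = (starRingEnd ℂ c) • σ v)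
    (hinv : σ ∘ σ = id)
    (hinner : ∀ v w : V, ⟪σ v, σ w⟫_ℂ = (starRingEnd ℂ) ⟪v, w⟫_ℂ)
    (N : ℕ) (e : Fin N → V)
    (hfix : ∀ i, σ (e i) = e i)
    (hindep : LinearIndependent ℝ e)
    (hspan : ∀ v : V, σ v = v → ∃ c : Fin N → ℝ, v = ∑ i, c i • e i)
    (hortho : ∀ i j, (⟪e i, e j⟫_ℂ).re = if i = j then 1 else 0) :
    ∀ v : V, ‖∑ i, ⟪e i, v⟫_ℂ ^ 2‖ ≤ ‖v‖ ^ 2 ∧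
      (σ v = v → ‖∑ i, ⟪e i, v⟫_ℂ ^ 2‖ = ‖v‖ ^ 2) ∧
      (σ v = v → ∑ i, ⟪e i, v⟫_ℂ ^ 2 = ((‖v‖ ^ 2 : ℝ) : ℂ)) :=
  sum_inner_sq_restricts_to_norm_sq_general σ hinner N e hfix hspan hortho
end
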